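/- Let λ > 0 and μ > 0. There exists δ > 0 such that every solution y : [0,∞) → ℝ × ℝ of the time-reversed constant-mobility system y'(t) = −F(y(t)), where F(z,m) = ((μ/2)·z·|z| + λ·z + 2·m, −μ·m·|z| − μ·z), with ‖y(0)‖ < δ converges to the origin: y(t) → (0,0) as t → ∞; i.e., the origin is locally asymptotically stable for the time-reversed system. -/

import Mathlib

/-!
Along the reversed flow, the quadratic form
`V(z, m) = μ z² + λ z m + (2 + λ² / (2μ)) m²` satisfies
`V̇ = -λμ z² - 2λ m² + O(|z| (z² + m²))`, so `V̇ ≤ -k V` on a small sublevel set `{V ≤ c}`.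
That set is therefore forward invariant, Grönwall makes `V` decay exponentially along every
solution starting in it, and since `V` is positive definite such solutions tend to the origin.
-/

open Set Filter Topology Real

section Lyapunov

variable {W W' : ℝ → ℝ}

theorem le_of_deriv_right_neg_of_eq {c : ℝ}
    (hW : ∀ t ∈ Ici (0 : ℝ), HasDerivWithinAt W (W' t) (Ici 0) t) (hW0 : W 0 ≤ c)
    (hW' : ∀ t ≥ 0, W t = c → W' t < 0) {t : ℝ} (ht : 0 ≤ t) : W t ≤ c :=
  image_le_of_deriv_right_lt_deriv_boundary (B := fun _ => c) (B' := fun _ => 0)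
    (fun s hs => (hW s hs.1).continuousWithinAt.mono Icc_subset_Ici_self)
    (fun s hs => (hW s hs.1).mono (Ici_subset_Ici.2 hs.1)) hW0
    (fun _ => hasDerivAt_const _ c) (fun s hs => hW' s hs.1) ⟨ht, le_rfl⟩

theorem le_mul_exp_of_deriv_le_mul {k : ℝ}
    (hW : ∀ t ∈ Ici (0 : ℝ), HasDerivWithinAt W (W' t) (Ici 0) t)
    (hW' : ∀ t ≥ 0, W' t ≤ k * W t) {t : ℝ} (ht : 0 ≤ t) : W t ≤ W 0 * exp (k * t) := by
  have := le_gronwallBound_of_liminf_deriv_right_le (f' := W') (ε := 0) (a := 0) (b := t)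
    (fun s hs => (hW s hs.1).continuousWithinAt.mono Icc_subset_Ici_self)
    (fun s hs _ hr => ((hW s hs.1).mono (Ici_subset_Ici.2 hs.1)).liminf_right_slope_le hr)
    le_rfl (fun s hs => by simpa using hW' s hs.1) t ⟨ht, le_rfl⟩
  simpa [gronwallBound_ε0] using this

theorem tendsto_zero_of_deriv_le_neg_mul {c k : ℝ} (hc : 0 < c) (hk : 0 < k)
    (hW : ∀ t ∈ Ici (0 : ℝ), HasDerivWithinAt W (W' t) (Ici 0) t) (hW0 : W 0 < c)
    (hW' : ∀ t ≥ 0, W t ≤ c → W' t ≤ -k * W t) (hW_nonneg : ∀ t, 0 ≤ W t) :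
    Tendsto W atTop (𝓝 0) := by
  -- At the level `c` the derivative is `≤ -k c < 0`, so `W` never rises above `c`.
  have hbelow : ∀ t ≥ 0, W t ≤ c := fun t ht =>
    le_of_deriv_right_neg_of_eq hW hW0.le
      (fun s hs hs_eq => (hW' s hs hs_eq.le).trans_lt (by nlinarith)) ht
  have hdecay : ∀ t ≥ 0, W t ≤ W 0 * exp (-k * t) := fun t ht =>
    le_mul_exp_of_deriv_le_mul hW (fun s hs => hW' s hs (hbelow s hs)) ht
  have hexp : Tendsto (fun t => W 0 * exp (-k * t)) atTop (𝓝 0) := by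
    simpa [Function.comp_def] using
      (tendsto_exp_neg_atTop_nhds_zero.comp (tendsto_id.const_mul_atTop hk)).const_mul (W 0)
  exact squeeze_zero' (Eventually.of_forall hW_nonneg)
    ((eventually_ge_atTop 0).mono hdecay) hexp

end Lyapunov

theorem Prod.norm_sq_le_fst_sq_add_snd_sq (p : ℝ × ℝ) : ‖p‖ ^ 2 ≤ p.1 ^ 2 + p.2 ^ 2 := by
  rw [Prod.norm_def, Real.norm_eq_abs, Real.norm_eq_abs]
  rcases max_choice |p.1| |p.2| with h | h <;> rw [h, sq_abs] <;>
    nlinarith [sq_nonneg p.1, sq_nonneg p.2]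

namespace ConstantMobility

noncomputable def field (lam mu : ℝ) (p : ℝ × ℝ) : ℝ × ℝ :=
  ((mu / 2) * p.1 * |p.1| + lam * p.1 + 2 * p.2, -(mu * p.2 * |p.1|) - mu * p.1)

/-- The coefficient of `m²` is chosen so that the `z m` terms cancel in the derivative of
`lyap` along `-field`; the `λ z m` term is what turns the damping `-λ z` into damping of `m`. -/
noncomputable def lyap (lam mu : ℝ) (p : ℝ × ℝ) : ℝ :=
  mu * p.1 ^ 2 + lam * (p.1 * p.2) + (2 + lam ^ 2 / (2 * mu)) * p.2 ^ 2

noncomputable def lyapDeriv (lam mu : ℝ) (p v : ℝ × ℝ) : ℝ :=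
  mu * (2 * p.1 * v.1) + lam * (v.1 * p.2 + p.1 * v.2) +
    (2 + lam ^ 2 / (2 * mu)) * (2 * p.2 * v.2)

variable {lam mu : ℝ}

theorem lyap_eq_sum_sq (hmu : 0 < mu) (p : ℝ × ℝ) :
    lyap lam mu p = mu / 2 * p.1 ^ 2 + 2 * p.2 ^ 2 + (mu * p.1 + lam * p.2) ^ 2 / (2 * mu) := by
  unfold lyap
  field_simp
  ring

theorem lyap_nonneg (hmu : 0 < mu) (p : ℝ × ℝ) : 0 ≤ lyap lam mu p := by
  rw [lyap_eq_sum_sq hmu]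
  positivity

theorem min_mul_le_lyap (hmu : 0 < mu) (p : ℝ × ℝ) :
    min (mu / 2) 2 * (p.1 ^ 2 + p.2 ^ 2) ≤ lyap lam mu p := by
  have hsq : 0 ≤ (mu * p.1 + lam * p.2) ^ 2 / (2 * mu) := by positivity
  rw [lyap_eq_sum_sq hmu]
  nlinarith [min_le_left (mu / 2) 2, min_le_right (mu / 2) 2, sq_nonneg p.1, sq_nonneg p.2]

theorem lyap_le (hlam : 0 < lam) (hmu : 0 < mu) (p : ℝ × ℝ) :
    lyap lam mu p ≤ (mu + lam + 2 + lam ^ 2 / (2 * mu)) * (p.1 ^ 2 + p.2 ^ 2) := by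
  have : 0 < lam ^ 2 / (2 * mu) := by positivity
  unfold lyap
  nlinarith [sq_nonneg (p.1 - p.2), sq_nonneg (p.1 + p.2), sq_nonneg p.1, sq_nonneg p.2]

theorem continuous_lyap (lam mu : ℝ) : Continuous (lyap lam mu) := by
  unfold lyap
  fun_prop

theorem _root_.HasDerivWithinAt.lyap {y : ℝ → ℝ × ℝ} {v : ℝ × ℝ} {s : Set ℝ} {t : ℝ}
    (hy : HasDerivWithinAt y v s t) :
    HasDerivWithinAt (fun t => lyap lam mu (y t)) (lyapDeriv lam mu (y t) v) s t := by
  have h₁ : HasDerivWithinAt (fun t => (y t).1) v.1 s t := hy.fst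
  have h₂ : HasDerivWithinAt (fun t => (y t).2) v.2 s t := hy.snd
  refine ((((h₁.pow 2).const_mul mu).add ((h₁.mul h₂).const_mul lam)).add
    ((h₂.pow 2).const_mul (2 + lam ^ 2 / (2 * mu)))).congr_deriv ?_
  simp only [lyapDeriv]
  ring

theorem lyapDeriv_neg_field (hmu : 0 < mu) (p : ℝ × ℝ) :
    lyapDeriv lam mu p (-field lam mu p) = -(lam * mu) * p.1 ^ 2 - 2 * lam * p.2 ^ 2 +
      |p.1| * (-(mu ^ 2 * p.1 ^ 2) + lam * mu / 2 * (p.1 * p.2) +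
        (4 * mu + lam ^ 2) * p.2 ^ 2) := by
  simp only [lyapDeriv, field, Prod.fst_neg, Prod.snd_neg]
  field_simp
  ring

theorem lyapDeriv_neg_field_le (hlam : 0 < lam) (hmu : 0 < mu) (p : ℝ × ℝ) :
    lyapDeriv lam mu p (-field lam mu p) ≤
      (-(lam * min mu 2) + (lam * mu / 4 + 4 * mu + lam ^ 2) * |p.1|) * (p.1 ^ 2 + p.2 ^ 2) := by
  have hquad : -(lam * mu) * p.1 ^ 2 - 2 * lam * p.2 ^ 2 ≤
      -(lam * min mu 2) * (p.1 ^ 2 + p.2 ^ 2) := by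
    nlinarith [mul_nonneg hlam.le (mul_nonneg (sub_nonneg.2 (min_le_left mu 2)) (sq_nonneg p.1)),
      mul_nonneg hlam.le (mul_nonneg (sub_nonneg.2 (min_le_right mu 2)) (sq_nonneg p.2))]
  have hcubic : -(mu ^ 2 * p.1 ^ 2) + lam * mu / 2 * (p.1 * p.2) + (4 * mu + lam ^ 2) * p.2 ^ 2 ≤
      (lam * mu / 4 + 4 * mu + lam ^ 2) * (p.1 ^ 2 + p.2 ^ 2) := by
    nlinarith [mul_nonneg (mul_pos hlam hmu).le (sq_nonneg (p.1 - p.2)), sq_nonneg (mu * p.1),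
      mul_nonneg (add_nonneg (mul_pos four_pos hmu).le (sq_nonneg lam)) (sq_nonneg p.1)]
  rw [lyapDeriv_neg_field hmu]
  nlinarith [mul_le_mul_of_nonneg_left hcubic (abs_nonneg p.1)]

theorem exists_lyapDeriv_neg_field_le_neg_mul_lyap (hlam : 0 < lam) (hmu : 0 < mu) :
    ∃ c > 0, ∃ k > 0, ∀ p : ℝ × ℝ,
      lyap lam mu p ≤ c → lyapDeriv lam mu p (-field lam mu p) ≤ -k * lyap lam mu p := by
  set κ := lam * min mu 2
  set M := lam * mu / 4 + 4 * mu + lam ^ 2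
  set α := min (mu / 2) 2
  set β := mu + lam + 2 + lam ^ 2 / (2 * mu)
  have hκ : 0 < κ := mul_pos hlam (lt_min hmu two_pos)
  have hM : 0 < M := by positivity
  have hα : 0 < α := lt_min (half_pos hmu) two_pos
  have hβ : 0 < β := by positivity
  -- Where `|z| ≤ κ / (2 M)` the cubic terms eat at most half of the linear decay rate `κ`.
  refine ⟨α * (κ / (2 * M)) ^ 2, by positivity, κ / (2 * β), by positivity, fun p hp => ?_⟩
  have hN : p.1 ^ 2 + p.2 ^ 2 ≤ (κ / (2 * M)) ^ 2 :=
    le_of_mul_le_mul_left ((min_mul_le_lyap hmu p).trans hp) hα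
  have hz : |p.1| ≤ κ / (2 * M) :=
    abs_le_of_sq_le_sq (by nlinarith [sq_nonneg p.2]) (by positivity)
  have hMz : M * |p.1| ≤ κ / 2 := by
    calc M * |p.1| ≤ M * (κ / (2 * M)) := by gcongr
      _ = κ / 2 := by field_simp
  calc lyapDeriv lam mu p (-field lam mu p) ≤ (-κ + M * |p.1|) * (p.1 ^ 2 + p.2 ^ 2) :=
        lyapDeriv_neg_field_le hlam hmu p
    _ ≤ -(κ / 2) * (p.1 ^ 2 + p.2 ^ 2) := by gcongr; linarith
    _ = -(κ / (2 * β)) * (β * (p.1 ^ 2 + p.2 ^ 2)) := by field_simp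
    _ ≤ -(κ / (2 * β)) * lyap lam mu p := by
        rw [neg_mul, neg_mul, neg_le_neg_iff]
        gcongr
        exact lyap_le hlam hmu p

theorem tendsto_zero_of_tendsto_lyap {ι : Type*} {l : Filter ι} {y : ι → ℝ × ℝ} (hmu : 0 < mu)
    (h : Tendsto (fun t => lyap lam mu (y t)) l (𝓝 0)) : Tendsto y l (𝓝 0) := by
  have hα : 0 < min (mu / 2) 2 := lt_min (half_pos hmu) two_pos
  have hnorm (p : ℝ × ℝ) : ‖p‖ ≤ √(lyap lam mu p / min (mu / 2) 2) := by
    rw [Real.le_sqrt (norm_nonneg p) (div_nonneg (lyap_nonneg hmu p) hα.le), le_div_iff₀ hα,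
      mul_comm]
    exact (mul_le_mul_of_nonneg_left p.norm_sq_le_fst_sq_add_snd_sq hα.le).trans
      (min_mul_le_lyap hmu p)
  refine tendsto_zero_iff_norm_tendsto_zero.2
    (squeeze_zero (fun _ => norm_nonneg _) (fun t => hnorm (y t)) ?_)
  simpa using (h.div_const _).sqrt

end ConstantMobility

open ConstantMobility

/-- The origin is locally asymptotically stable for the time reversal `y' = −F(y)` of
the constant-mobility system: there is `δ > 0` such that every solution on `[0,∞)`
starting with `‖y(0)‖ < δ` converges to the origin. -/
theorem constant_mobility_reversed_origin_asymptotically_stable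
    (lam mu : ℝ) (hlam : 0 < lam) (hmu : 0 < mu) :
    let F : ℝ × ℝ → ℝ × ℝ := fun p =>
      ((mu / 2) * p.1 * |p.1| + lam * p.1 + 2 * p.2, -(mu * p.2 * |p.1|) - mu * p.1)
    ∃ δ : ℝ, 0 < δ ∧
      ∀ y : ℝ → ℝ × ℝ,
        (∀ t ∈ Set.Ici (0 : ℝ), HasDerivWithinAt y (-(F (y t))) (Set.Ici 0) t) →
        ‖y 0‖ < δ →
        Filter.Tendsto y Filter.atTop (nhds ((0 : ℝ), (0 : ℝ))) := by
  intro F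
  obtain ⟨c, hc, k, hk, hdecay⟩ := exists_lyapDeriv_neg_field_le_neg_mul_lyap hlam hmu
  obtain ⟨δ, hδ, hδc⟩ := Metric.eventually_nhds_iff.1 <|
    ((continuous_lyap lam mu).tendsto' 0 0 (by simp [lyap])).eventually (gt_mem_nhds hc)
  refine ⟨δ, hδ, fun y hy hy0 => tendsto_zero_of_tendsto_lyap (lam := lam) hmu ?_⟩
  exact tendsto_zero_of_deriv_le_neg_mul hc hk (fun t ht => (hy t ht).lyap)
    (hδc (by simpa using hy0)) (fun t _ => hdecay (y t)) (fun t => lyap_nonneg hmu (y t))
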